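/- arXiv:2309.08886 — 4 statements merged into one kernel-verified Lean document; each statement's English description precedes it below -/
import Mathlib

section
/- Let $E$ be a number field admitting a $\mathbb{Q}$-algebra automorphism $c : E \to E$ with $c \circ c = \mathrm{id}$, $c \neq \mathrm{id}$, and such that $\sigma \circ c = \overline{(\cdot)} \circ \sigma$ (complex conjugation after $\sigma$) for every ring embedding $\sigma : E \to \mathbb{C}$. Let $\Phi$ be a CM-type of $E$, i.e. a set of embeddings $E \to \mathbb{C}$ containing, for every embedding $\sigma$, exactly one element of the pair $\{\sigma, \overline{(\cdot)}\circ\sigma\}$. Then the image of the set $\{x \in E : c(x) = -x\}$ under the map $x \mapsto (\sigma(x))_{\sigma \in \Phi} \in \mathbb{C}^{\Phi}$ is dense in the real subspace $\{z \in \mathbb{C}^{\Phi} : \mathrm{Re}(z_\sigma) = 0 \text{ for all } \sigma \in \Phi\}$ of purely imaginary tuples. -/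
/-!
Write `L x = (σ x)_{σ ∈ Φ}`. Since `Φ` and its conjugate `Φ̄` are disjoint, any `w ∈ ℂ^Φ` is the
`Φ`-part of `v + v̄ ∘ conj`, where `v` extends `w` by zero to all embeddings; writing `v` in a
`ℂ`-basis of `ℂ^{Hom(E, ℂ)}` made of images of elements of `E` then shows that `L(E)` spans `ℂ^Φ`
over `ℝ`. Applying the skew-adjoint part `w ↦ (w - w̄) / 2`, which sends `L x` to
`L ((x - c x) / 2)`, the image of the anti-symmetric elements spans the imaginary tuples over `ℝ`.
Being a `ℚ`-vector space, it is dense in its real span.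
-/

open Complex ComplexConjugate NumberField

theorem Submodule.span_real_subset_closure {M : Type*} [AddCommGroup M] [Module ℝ M]
    [Module ℚ M] [TopologicalSpace M] [IsTopologicalAddGroup M] [ContinuousSMul ℝ M]
    (S : Submodule ℚ M) : (span ℝ (S : Set M) : Set M) ⊆ closure S := by
  let T : Submodule ℝ M :=
    { S.toAddSubgroup.topologicalClosure with
      smul_mem' := fun r x hx => by
        have hrat : ∀ q : ℚ, (q : ℝ) • x ∈ closure (S : Set M) := fun q =>
          map_mem_closure (continuous_const_smul _) hx fun y hy => by
            rw [Rat.cast_smul_eq_qsmul]; exact S.smul_mem q hy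
        have hclosed : IsClosed {r : ℝ | r • x ∈ closure (S : Set M)} :=
          isClosed_closure.preimage (continuous_id.smul continuous_const)
        exact hclosed.closure_subset_iff.mpr (Set.range_subset_iff.mpr hrat)
          (Rat.denseRange_cast r) }
  exact (span_le (p := T)).mpr subset_closure

theorem NumberField.span_real_range_eval_eq_top {K : Type*} [Field K] [NumberField K]
    {Φ : Set (K →+* ℂ)} (hΦ : ∀ σ ∈ Φ, (starRingEnd ℂ).comp σ ∉ Φ) :
    Submodule.span ℝ (Set.range fun (x : K) (σ : Φ) => (σ : K →+* ℂ) x) = ⊤ := by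
  classical
  refine Submodule.eq_top_iff'.mpr fun w => ?_
  let B := canonicalEmbedding.latticeBasis K
  let b := integralBasis K
  let v : (K →+* ℂ) → ℂ := fun τ => if h : τ ∈ Φ then w ⟨τ, h⟩ else 0
  have hv : ∀ τ : K →+* ℂ, v τ = ∑ i, B.repr v i * τ (b i) := fun τ => by
    conv_lhs => rw [← B.sum_repr v]
    simp [B, b, canonicalEmbedding.apply_at]
  have hw : w = ∑ i, (2 * (B.repr v i).re) • fun σ : Φ => (σ : K →+* ℂ) (b i) := by
    funext σ
    have hwv : w σ = v σ + conj (v ((starRingEnd ℂ).comp σ)) := by simp [v, hΦ σ σ.2]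
    rw [hwv, hv, hv, map_sum, Finset.sum_apply, ← Finset.sum_add_distrib]
    refine Finset.sum_congr rfl fun i _ => ?_
    simp only [RingHom.coe_comp, Function.comp_apply, map_mul, conj_conj, Pi.smul_apply,
      real_smul, ← add_mul, add_conj]
  rw [hw]
  exact Submodule.sum_mem _ fun i _ => Submodule.smul_mem _ _ (Submodule.subset_span ⟨b i, rfl⟩)

theorem coe_skewAdjointPart_eval_mem_image {E : Type*} [Field E] {Φ : Set (E →+* ℂ)}
    (c : E →+* E) (hc2 : ∀ x, c (c x) = x) (hconj : ∀ σ ∈ Φ, ∀ x, σ (c x) = conj (σ x))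
    (x : E) :
    (skewAdjointPart ℝ (fun σ : Φ => (σ : E →+* ℂ) x) : Φ → ℂ) ∈
      (fun (y : E) (σ : Φ) => (σ : E →+* ℂ) y) '' {y | c y = -y} := by
  refine ⟨2⁻¹ * (x - c x), ?_, funext fun σ => ?_⟩
  · simp only [Set.mem_ofPred_eq, map_mul, map_sub, map_inv₀, map_ofNat, hc2]
    ring
  · simp [hconj σ σ.2, invOf_eq_inv, real_smul, map_ofNat]

theorem antisymmetric_dense_in_imaginary_general (E : Type*) [Field E] [NumberField E]
    (c : E ≃ₐ[ℚ] E) (hc2 : ∀ x, c (c x) = x)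
    (hconj : ∀ (σ : E →+* ℂ) (x : E), σ (c x) = starRingEnd ℂ (σ x))
    (Φ : Set (E →+* ℂ))
    (hΦ : ∀ σ : E →+* ℂ, σ ∈ Φ ↔ (starRingEnd ℂ).comp σ ∉ Φ) :
    {z : Φ → ℂ | ∀ σ : Φ, (z σ).re = 0}
      ⊆ closure ((fun (x : E) (σ : Φ) => (σ : E →+* ℂ) x) '' {x : E | c x = -x}) := by
  let L : E →ₗ[ℚ] Φ → ℂ := (RingHom.pi fun σ : Φ => (σ : E →+* ℂ)).toRatAlgHom.toLinearMap
  let A : Submodule ℚ E := LinearMap.eqLocus c.toLinearMap (-LinearMap.id)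
  let P : (Φ → ℂ) →ₗ[ℝ] Φ → ℂ := (skewAdjoint.submodule ℝ _).subtype ∘ₗ skewAdjointPart ℝ
  intro z hz
  have hskew : z ∈ skewAdjoint (Φ → ℂ) := by
    rw [skewAdjoint.mem_iff]
    funext σ
    apply Complex.ext <;> simp [hz σ]
  have hPz : P z = z := congrArg Subtype.val
    (LinearMap.congr_fun (skewAdjointPart_comp_subtype_skewAdjoint ℝ) ⟨z, hskew⟩)
  have hspan := NumberField.span_real_range_eval_eq_top fun σ hσ => (hΦ σ).mp hσ
  have hPz_mem : P z ∈ (Submodule.span ℝ (Set.range L)).map P :=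
    Submodule.mem_map_of_mem (hspan ▸ Submodule.mem_top)
  rw [Submodule.map_span, ← Set.range_comp, hPz] at hPz_mem
  refine (A.map L).span_real_subset_closure (Submodule.span_mono ?_ hPz_mem)
  rintro _ ⟨x, rfl⟩
  exact coe_skewAdjointPart_eval_mem_image c.toRingHom hc2 (fun σ _ => hconj σ) x

/-- **Density of anti-symmetric elements of a CM field in the purely imaginary tuples.**
Let `E` be a number field with a complex conjugation `c` (an involutive nontrivial
`ℚ`-algebra automorphism commuting with complex conjugation through every embedding
`E → ℂ`), and let `Φ` be a CM-type of `E`. Then the image of the anti-symmetric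
elements `{x : E | c x = -x}` under `x ↦ (σ x)_{σ ∈ Φ}` is dense in the set of
purely imaginary tuples in `ℂ^Φ`. -/
theorem antisymmetric_dense_in_imaginary (E : Type*) [Field E] [NumberField E]
    (c : E ≃ₐ[ℚ] E) (hc2 : ∀ x, c (c x) = x) (hc_ne : c ≠ AlgEquiv.refl (R := ℚ) (A₁ := E))
    (hconj : ∀ (σ : E →+* ℂ) (x : E), σ (c x) = starRingEnd ℂ (σ x))
    (Φ : Set (E →+* ℂ))
    (hΦ : ∀ σ : E →+* ℂ, σ ∈ Φ ↔ (starRingEnd ℂ).comp σ ∉ Φ) :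
    {z : Φ → ℂ | ∀ σ : Φ, (z σ).re = 0}
      ⊆ closure ((fun (x : E) (σ : Φ) => (σ : E →+* ℂ) x) '' {x : E | c x = -x}) :=
  antisymmetric_dense_in_imaginary_general E c hc2 hconj Φ hΦ
end

section
/- Let $E$ be a number field admitting a $\mathbb{Q}$-algebra automorphism $c : E \to E$ with $c \circ c = \mathrm{id}$, $c \neq \mathrm{id}$, and such that $\sigma \circ c = \overline{(\cdot)} \circ \sigma$ for every ring embedding $\sigma : E \to \mathbb{C}$. Let $\Phi$ be a CM-type of $E$ (a set of embeddings containing exactly one of $\{\sigma, \overline{(\cdot)}\circ\sigma\}$ for each embedding $\sigma$). Then for every choice of signs $\varepsilon : \Phi \to \{+1,-1\}$ there exists $\gamma \in E$ with $c(\gamma) = -\gamma$ and $\varepsilon(\sigma)\cdot\mathrm{Im}(\sigma(\gamma)) > 0$ for all $\sigma \in \Phi$; in particular $\gamma \neq 0$. -/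
open Complex

lemma aux_span (E : Type*) [Field E] [NumberField E]
    (Φ : Set (E →+* ℂ))
    (hΦ : ∀ σ : E →+* ℂ, σ ∈ Φ ↔ (starRingEnd ℂ).comp σ ∉ Φ)
    [Fintype Φ] :
    Submodule.span ℝ (Set.range fun x : E => fun σ : Φ => ((σ : E →+* ℂ) x).im) = ⊤ := by
  classical
  rw [← Subspace.dualAnnihilator_inj, Submodule.dualAnnihilator_top]
  rw [Submodule.eq_bot_iff]
  intro φ hφ
  have h0 : ∀ x : E, φ (fun σ : Φ => ((σ : E →+* ℂ) x).im) = 0 := fun x =>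
    (Submodule.mem_dualAnnihilator φ).mp hφ _ (Submodule.subset_span ⟨x, rfl⟩)
  set lam : Φ → ℝ := fun σ => φ (fun j => if σ = j then 1 else 0) with hlam
  have hsum : ∀ x : E, ∑ σ : Φ, lam σ * ((σ : E →+* ℂ) x).im = 0 := by
    intro x
    have := h0 x
    rw [LinearMap.pi_apply_eq_sum_univ φ] at this
    simpa [mul_comm, smul_eq_mul] using this
  set cc : (E →+* ℂ) → (E →+* ℂ) := fun σ => (starRingEnd ℂ).comp σ with hccdef
  have hcc : ∀ σ, cc (cc σ) = σ := by
    intro σ; ext x; simp [cc, RingHom.comp_apply]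
  have hmem : ∀ τ : E →+* ℂ, τ ∉ Φ → cc τ ∈ Φ := fun τ hτ =>
    (hΦ (cc τ)).mpr (by rw [show (starRingEnd ℂ).comp (cc τ) = τ from hcc τ]; exact hτ)
  have hnotmem : ∀ σ : E →+* ℂ, σ ∈ Φ → cc σ ∉ Φ := fun σ hσ => (hΦ σ).mp hσ
  set μ : (E →+* ℂ) → ℂ := fun τ =>
    if h : τ ∈ Φ then ((lam ⟨τ, h⟩ : ℝ) : ℂ) else -((lam ⟨cc τ, hmem τ h⟩ : ℝ) : ℂ) with hμ
  have hμΦ : ∀ σ : Φ, μ σ = ((lam σ : ℝ) : ℂ) := by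
    intro σ; rw [hμ]; simp only [dif_pos σ.2]
  have hμcc : ∀ σ : Φ, μ (cc σ) = -((lam σ : ℝ) : ℂ) := by
    intro σ
    rw [hμ]
    simp only [dif_neg (hnotmem σ σ.2)]
    congr 2
    exact congrArg lam (Subtype.ext (hcc σ))
  -- equivalence between Φ and its complement
  set d : Φ ≃ {τ : E →+* ℂ // τ ∉ Φ} :=
    { toFun := fun σ => ⟨cc σ, hnotmem σ σ.2⟩
      invFun := fun τ => ⟨cc τ, hmem τ τ.2⟩
      left_inv := fun σ => Subtype.ext (hcc σ)
      right_inv := fun τ => Subtype.ext (hcc τ) } with hd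
  have hvanish : ∀ x : E, ∑ τ : E →+* ℂ, μ τ * τ x = 0 := by
    intro x
    rw [← Equiv.sum_comp (Equiv.sumCompl (· ∈ Φ)) (fun τ => μ τ * τ x),
      Fintype.sum_sum_type]
    have h2 : ∑ τ : {τ : E →+* ℂ // τ ∉ Φ}, μ τ.1 * τ.1 x
        = ∑ σ : Φ, μ (cc σ) * (cc σ.1) x :=
      (Fintype.sum_equiv d _ _ (fun σ => rfl)).symm
    simp only [Equiv.sumCompl_apply_inl, Equiv.sumCompl_apply_inr]
    rw [h2, ← Finset.sum_add_distrib]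
    have h3 : ∀ σ : Φ, μ σ.1 * σ.1 x + μ (cc σ.1) * (cc σ.1) x
        = ((lam σ : ℝ) : ℂ) * ((σ : E →+* ℂ) x - (starRingEnd ℂ) ((σ : E →+* ℂ) x)) := by
      intro σ
      rw [hμΦ σ, hμcc σ]
      have : (cc σ.1) x = (starRingEnd ℂ) (σ.1 x) := rfl
      rw [this]
      ring
    rw [Finset.sum_congr rfl fun σ _ => h3 σ]
    have h4 : ∑ σ : Φ, ((lam σ : ℝ) : ℂ) * ((σ : E →+* ℂ) x - (starRingEnd ℂ) ((σ : E →+* ℂ) x))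
        = (2 * I) * (((∑ σ : Φ, lam σ * ((σ : E →+* ℂ) x).im : ℝ)) : ℂ) := by
      push_cast
      rw [Finset.mul_sum]
      refine Finset.sum_congr rfl fun σ _ => ?_
      rw [Complex.sub_conj]
      push_cast
      ring
    rw [h4, hsum x]
    simp
  -- linear independence of characters
  have li : LinearIndependent ℂ (fun τ : (E →+* ℂ) => (τ : E → ℂ)) := by
    have h := linearIndependent_monoidHom E ℂ
    exact h.comp (fun τ : (E →+* ℂ) => (τ : E →* ℂ)) (fun a b hab => by
      ext x; exact DFunLike.congr_fun hab x)
  have hμ0 : ∀ τ : E →+* ℂ, μ τ = 0 := by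
    refine Fintype.linearIndependent_iff.mp li μ ?_
    funext x
    have := hvanish x
    simpa [Finset.sum_apply, Pi.smul_apply, smul_eq_mul] using this
  have hlam0 : ∀ σ : Φ, lam σ = 0 := by
    intro σ
    have := hμ0 σ
    rw [hμΦ σ] at this
    exact_mod_cast this
  refine LinearMap.ext fun y => ?_
  rw [LinearMap.pi_apply_eq_sum_univ φ y]
  simp only [LinearMap.zero_apply]
  refine Finset.sum_eq_zero fun σ _ => ?_
  rw [show φ (fun j => if σ = j then 1 else 0) = lam σ from rfl, hlam0 σ, smul_zero]

/-- **Anti-symmetric elements with prescribed signs of imaginary parts.**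
Let `E` be a number field with a complex conjugation `c` (an involutive nontrivial
`ℚ`-algebra automorphism commuting with complex conjugation through every embedding
`E → ℂ`), and let `Φ` be a CM-type of `E`. Then for every choice of signs
`ε : Φ → {±1}` there is an anti-symmetric `γ ∈ E` (i.e. `c γ = -γ`) with
`ε σ * Im (σ γ) > 0` for all `σ ∈ Φ`; in particular `γ ≠ 0`. -/
theorem exists_antisymmetric_with_signs (E : Type*) [Field E] [NumberField E]
    (c : E ≃ₐ[ℚ] E) (hc2 : ∀ x, c (c x) = x)
    (hc_ne : c ≠ AlgEquiv.refl (R := ℚ) (A₁ := E))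
    (hconj : ∀ (σ : E →+* ℂ) (x : E), σ (c x) = starRingEnd ℂ (σ x))
    (Φ : Set (E →+* ℂ))
    (hΦ : ∀ σ : E →+* ℂ, σ ∈ Φ ↔ (starRingEnd ℂ).comp σ ∉ Φ)
    (ε : Φ → ℝ) (hε : ∀ σ : Φ, ε σ = 1 ∨ ε σ = -1) :
    ∃ γ : E, c γ = -γ ∧ (∀ σ : Φ, 0 < ε σ * ((σ : E →+* ℂ) γ).im) ∧ γ ≠ 0 := by
  classical
  haveI : Fintype Φ := Fintype.ofFinite _
  -- Φ is nonempty
  have hΦne : Nonempty Φ := by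
    set σ0 : E →+* ℂ := (IsAlgClosed.lift (R := ℚ) (S := E) (M := ℂ)).toRingHom with hσ0
    by_cases h : σ0 ∈ Φ
    · exact ⟨⟨σ0, h⟩⟩
    · refine ⟨⟨(starRingEnd ℂ).comp σ0, (hΦ _).mpr ?_⟩⟩
      have : (starRingEnd ℂ).comp ((starRingEnd ℂ).comp σ0) = σ0 := by
        ext x; simp [RingHom.comp_apply]
      rw [this]; exact h
  set m := Module.finrank ℚ E with hm
  set b : Module.Basis (Fin m) ℚ E := Module.finBasis ℚ E with hb
  set g : E → (Φ → ℝ) := fun x => fun σ : Φ => ((σ : E →+* ℂ) x).im with hg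
  set w : Fin m → (Φ → ℝ) := fun i => g (b i) with hw
  -- g is compatible with ℚ-linear combinations
  have himg : ∀ co : Fin m → ℚ, g (∑ i, co i • b i) = ∑ i, ((co i : ℝ)) • w i := by
    intro co
    funext σ
    have h1 : (σ : E →+* ℂ) (∑ i, co i • b i) = ∑ i, ((co i : ℂ)) * (σ : E →+* ℂ) (b i) := by
      rw [map_sum]
      refine Finset.sum_congr rfl fun i _ => ?_
      rw [Rat.smul_def, map_mul, map_ratCast]
    have h2 : ((∑ i, ((co i : ℂ)) * (σ : E →+* ℂ) (b i)).im)
        = ∑ i, (co i : ℝ) * ((σ : E →+* ℂ) (b i)).im := by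
      rw [Complex.im_sum]
      refine Finset.sum_congr rfl fun i _ => ?_
      simp [Complex.mul_im]
    calc g (∑ i, co i • b i) σ = ((σ : E →+* ℂ) (∑ i, co i • b i)).im := rfl
      _ = ∑ i, (co i : ℝ) * ((σ : E →+* ℂ) (b i)).im := by rw [h1, h2]
      _ = (∑ i, ((co i : ℝ)) • w i) σ := by
          rw [Finset.sum_apply]
          exact Finset.sum_congr rfl fun i _ => rfl
  -- spanning
  have hspan : Submodule.span ℝ (Set.range w) = ⊤ := by
    rw [eq_top_iff, ← aux_span E Φ hΦ]
    refine Submodule.span_le.mpr ?_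
    rintro _ ⟨x, rfl⟩
    show g x ∈ (Submodule.span ℝ (Set.range w) : Set (Φ → ℝ))
    have hx : g x = ∑ i, ((b.repr x i : ℝ)) • w i := by
      have := himg (fun i => b.repr x i)
      rw [show (∑ i, b.repr x i • b i) = x from b.sum_repr x] at this
      exact this
    rw [hx]
    exact Submodule.sum_mem _ fun i _ =>
      Submodule.smul_mem _ _ (Submodule.subset_span ⟨i, rfl⟩)
  -- find real coefficients hitting the target
  set t : Φ → ℝ := fun σ => ε σ with ht
  obtain ⟨a, ha⟩ := (Submodule.mem_span_range_iff_exists_fun ℝ).mp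
    (hspan ▸ Submodule.mem_top : t ∈ Submodule.span ℝ (Set.range w))
  set F : (Fin m → ℝ) → (Φ → ℝ) := fun a => ∑ i, a i • w i with hF
  have hFc : Continuous F := by
    apply continuous_finset_sum
    intro i _
    exact (continuous_apply i).smul continuous_const
  set U : Set (Φ → ℝ) := {y | ∀ σ, 0 < ε σ * y σ} with hUdef
  have hU : IsOpen U := by
    have : U = ⋂ σ : Φ, {y : Φ → ℝ | 0 < ε σ * y σ} := by
      ext y; simp [hUdef, Set.mem_iInter]
    rw [this]
    exact isOpen_iInter_of_finite fun σ =>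
      isOpen_lt continuous_const (continuous_const.mul (continuous_apply σ))
  have htU : t ∈ U := by
    intro σ
    rcases hε σ with h | h <;> simp [ht, h]
  have hnhds : F ⁻¹' U ∈ nhds a := (hU.preimage hFc).mem_nhds (by
    rw [Set.mem_preimage, hF]
    simpa [ha] using htU)
  obtain ⟨r, hr, hball⟩ := Metric.mem_nhds_iff.mp hnhds
  choose q hq1 hq2 using fun i => exists_rat_btwn (show a i - r/2 < a i + r/2 by linarith)
  have hqa : (fun i => (q i : ℝ)) ∈ Metric.ball a r := by
    rw [Metric.mem_ball, dist_pi_lt_iff hr]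
    intro i
    rw [Real.dist_eq, abs_sub_lt_iff]
    constructor <;> [linarith [hq2 i]; linarith [hq1 i]]
  have hqU : F (fun i => (q i : ℝ)) ∈ U := hball hqa
  set γ₀ : E := ∑ i, q i • b i with hγ₀
  have hgγ₀ : g γ₀ = F (fun i => (q i : ℝ)) := himg q
  have hpos : ∀ σ : Φ, 0 < ε σ * ((σ : E →+* ℂ) γ₀).im := by
    intro σ
    have := hqU σ
    rw [← hgγ₀] at this
    exact this
  refine ⟨γ₀ - c γ₀, ?_, ?_, ?_⟩
  · rw [map_sub, hc2]
    ring
  · intro σ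
    have him : ((σ : E →+* ℂ) (γ₀ - c γ₀)).im = 2 * ((σ : E →+* ℂ) γ₀).im := by
      rw [map_sub, hconj]
      simp [Complex.sub_im, Complex.conj_im]
      ring
    rw [him]
    have := hpos σ
    nlinarith
  · intro h0
    obtain ⟨σ⟩ := hΦne
    have him : ((σ : E →+* ℂ) (γ₀ - c γ₀)).im = 2 * ((σ : E →+* ℂ) γ₀).im := by
      rw [map_sub, hconj]
      simp [Complex.sub_im, Complex.conj_im]
      ring
    have := hpos σ
    rw [h0] at him
    simp at him
    rw [him] at this
    simp at this
end

section
/- Let $E$ be a number field and $c : E \simeq_{\mathbb{Q}} E$ a $\mathbb{Q}$-algebra automorphism with $c \circ c = \mathrm{id}$. Let $p$ be a prime. Give $V_p := \mathbb{Q}_p \otimes_{\mathbb{Q}} E$ and $V_\infty := \mathbb{R} \otimes_{\mathbb{Q}} E$ their canonical topologies as finite-dimensional topological vector spaces over $\mathbb{Q}_p$ and $\mathbb{R}$ respectively. Then the image of $\{x \in E : c(x) = -x\}$ under the map $x \mapsto (1 \otimes x, 1 \otimes x)$ is dense in the set $\{(y,z) \in V_p \times V_\infty : (\mathrm{id}\otimes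 c)(y) = -y \text{ and } (\mathrm{id}\otimes c)(z) = -z\}$. -/
open TensorProduct

/-- Rational numbers are simultaneously dense in `ℚ_[p] × ℝ`. -/
lemma ratDensePair (p : ℕ) [Fact p.Prime] (x : ℚ_[p]) (y : ℝ) {ε : ℝ} (hε : 0 < ε) :
    ∃ q : ℚ, ‖x - (q : ℚ_[p])‖ < ε ∧ |y - (q : ℝ)| < ε := by
  have hp1 : (1:ℝ) < (p:ℝ) := by exact_mod_cast (Fact.out : p.Prime).one_lt
  obtain ⟨r, hr⟩ := Padic.rat_dense (p := p) x hε
  obtain ⟨N, hN⟩ : ∃ N : ℕ, ((p:ℝ)^N)⁻¹ < ε := by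
    obtain ⟨N, hN⟩ := exists_pow_lt_of_lt_one hε (show (p:ℝ)⁻¹ < 1 by
      rw [inv_lt_one_iff₀]; right; exact hp1)
    exact ⟨N, by rwa [inv_pow] at hN⟩
  have hpN : (0:ℝ) < (p:ℝ)^N := by positivity
  obtain ⟨M, hM⟩ : ∃ M : ℕ, (p:ℝ)^N / ((p:ℝ)+1)^M < ε := by
    obtain ⟨M, hM⟩ := exists_pow_lt_of_lt_one (show (0:ℝ) < ε / (p:ℝ)^N by positivity)
      (show ((p:ℝ)+1)⁻¹ < 1 by rw [inv_lt_one_iff₀]; right; linarith)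
    refine ⟨M, ?_⟩
    rw [inv_pow] at hM
    rw [div_eq_mul_inv, ← lt_div_iff₀' hpN]
    exact hM
  set δ : ℚ := (p:ℚ)^N / ((p:ℚ)+1)^M with hδdef
  have hδpos : (0:ℚ) < δ := by
    have : (0:ℚ) < (p:ℚ) := by exact_mod_cast (Fact.out : p.Prime).pos
    positivity
  have hδreal : ((δ:ℝ)) = (p:ℝ)^N / ((p:ℝ)+1)^M := by push_cast [hδdef]; ring
  set k : ℤ := round ((y - (r:ℝ)) / (δ:ℝ)) with hk
  refine ⟨r + k * δ, ?_, ?_⟩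
  · -- p-adic estimate
    have hkδ : ‖((k * δ : ℚ) : ℚ_[p])‖ ≤ ((p:ℝ)^N)⁻¹ := by
      rw [hδdef]
      push_cast
      have h1 : ‖((k:ℚ_[p]))‖ ≤ 1 := Padic.norm_int_le_one k
      have h2 : ‖((p:ℚ_[p]))^N‖ = ((p:ℝ)^N)⁻¹ := by
        rw [Padic.norm_p_pow]
        rw [zpow_neg, zpow_natCast]
      have h3 : ‖((p:ℚ_[p])+1)^M‖ = 1 := by
        rw [norm_pow]
        have hle : ‖((p:ℚ_[p])+1)‖ ≤ 1 := by
          have : ((p:ℚ_[p])+1) = (((p:ℤ)+1 : ℤ) : ℚ_[p]) := by push_cast; ring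
          rw [this]; exact Padic.norm_int_le_one _
        have hnlt : ¬ ‖((p:ℚ_[p])+1)‖ < 1 := by
          have : ((p:ℚ_[p])+1) = (((p:ℤ)+1 : ℤ) : ℚ_[p]) := by push_cast; ring
          rw [this, Padic.norm_intCast_lt_one_iff]
          intro hdvd
          have h0 : ((p:ℤ)) ∣ 1 := (Int.dvd_add_right (dvd_refl ((p:ℤ)))).mp hdvd
          have h1 := Int.le_of_dvd one_pos h0
          have := (Fact.out : p.Prime).two_le
          omega
        have := lt_or_eq_of_le hle
        rcases this with h | h
        · exact absurd h hnlt
        · rw [h, one_pow]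
      calc ‖((k:ℚ_[p]) * ((p:ℚ_[p])^N / ((p:ℚ_[p])+1)^M))‖
          = ‖(k:ℚ_[p])‖ * (‖(p:ℚ_[p])^N‖ / ‖((p:ℚ_[p])+1)^M‖) := by rw [norm_mul, norm_div]
        _ ≤ 1 * (((p:ℝ)^N)⁻¹ / 1) := by
            rw [h2, h3]
            gcongr
        _ = ((p:ℝ)^N)⁻¹ := by ring
    have : x - ((r + k * δ : ℚ) : ℚ_[p]) = (x - r) + (-((k * δ : ℚ) : ℚ_[p])) := by
      push_cast; ring
    rw [this]
    refine lt_of_le_of_lt (Padic.nonarchimedean _ _) (max_lt hr ?_)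
    rw [norm_neg]
    exact lt_of_le_of_lt hkδ hN
  · -- real estimate
    have hδR : (0:ℝ) < (δ:ℝ) := by exact_mod_cast hδpos
    have hround := abs_sub_round ((y - (r:ℝ)) / (δ:ℝ))
    have key : y - ((r:ℝ) + (k:ℝ) * (δ:ℝ)) = (δ:ℝ) * ((y - (r:ℝ))/(δ:ℝ) - (k:ℝ)) := by
      rw [mul_sub, mul_div_cancel₀ _ hδR.ne']
      ring
    have : |y - ((r + k * δ : ℚ) : ℝ)| = (δ:ℝ) * |(y - (r:ℝ)) / (δ:ℝ) - (k:ℝ)| := by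
      push_cast
      rw [key, abs_mul, abs_of_pos hδR]
    rw [this]
    calc (δ:ℝ) * |(y - (r:ℝ)) / (δ:ℝ) - (k:ℝ)| ≤ (δ:ℝ) * (1/2) := by
          exact mul_le_mul_of_nonneg_left hround hδR.le
      _ < ε := by rw [hδreal] at *; nlinarith [hM]

section Alg

variable {E : Type*} [Field E] [NumberField E]

/-- The anti-symmetric subspace of `E`. -/
noncomputable def Wc (c : E ≃ₐ[ℚ] E) : Submodule ℚ E :=
  LinearMap.ker (c.toLinearMap + LinearMap.id)

lemma mem_Wc {c : E ≃ₐ[ℚ] E} {x : E} : x ∈ Wc c ↔ c x = -x := by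
  simp only [Wc, LinearMap.mem_ker, LinearMap.add_apply, LinearMap.id_apply,
    AlgEquiv.toLinearMap_apply]
  constructor <;> intro h <;> linear_combination h

/-- A basis of the anti-symmetric subspace. -/
noncomputable def bW (c : E ≃ₐ[ℚ] E) :
    Module.Basis (Fin (Module.finrank ℚ (Wc c))) ℚ (Wc c) := Module.finBasis ℚ _

lemma exists_repr (K : Type*) [CommRing K] [Algebra ℚ K]
    (c : E ≃ₐ[ℚ] E) (hc2 : ∀ x, c (c x) = x) (y : K ⊗[ℚ] E)
    (hy : LinearMap.baseChange K c.toLinearMap y = -y) :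
    ∃ a : Fin (Module.finrank ℚ (Wc c)) → K,
      y = ∑ i, a i ⊗ₜ[ℚ] ((bW c i : E)) := by
  set π : E →ₗ[ℚ] E := (2:ℚ)⁻¹ • (LinearMap.id - c.toLinearMap) with hπ
  have hπmem : ∀ x, π x ∈ Wc c := by
    intro x
    rw [mem_Wc]
    simp only [hπ, LinearMap.smul_apply, LinearMap.sub_apply, LinearMap.id_apply,
      AlgEquiv.toLinearMap_apply]
    have hs : c ((2:ℚ)⁻¹ • (x - c x)) = (2:ℚ)⁻¹ • c (x - c x) :=
      map_smul c.toLinearMap _ _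
    rw [hs, map_sub, hc2, ← smul_neg]
    congr 1
    abel
  set π' : E →ₗ[ℚ] Wc c := π.codRestrict (Wc c) hπmem with hπ'
  have hcomp : (Wc c).subtype ∘ₗ π' = π := rfl
  have hπy : LinearMap.baseChange K π y = y := by
    rw [hπ, LinearMap.baseChange_smul, LinearMap.baseChange_sub, LinearMap.baseChange_id]
    simp only [LinearMap.smul_apply, LinearMap.sub_apply, LinearMap.id_apply, hy]
    rw [sub_neg_eq_add, ← two_smul ℚ y, smul_smul]
    norm_num
  set w : K ⊗[ℚ] (Wc c) := LinearMap.baseChange K π' y with hw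
  have hyw : LinearMap.baseChange K ((Wc c).subtype) w = y := by
    rw [hw, ← LinearMap.comp_apply, ← LinearMap.baseChange_comp, hcomp, hπy]
  set B := (bW c).baseChange K with hB
  refine ⟨fun i => B.repr w i, ?_⟩
  have := B.sum_repr w
  calc y = LinearMap.baseChange K ((Wc c).subtype) w := hyw.symm
    _ = LinearMap.baseChange K ((Wc c).subtype) (∑ i, B.repr w i • B i) := by rw [this]
    _ = ∑ i, B.repr w i ⊗ₜ[ℚ] ((bW c i : E)) := by
        rw [map_sum]
        refine Finset.sum_congr rfl fun i _ => ?_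
        rw [map_smul, hB, Module.Basis.baseChange_apply]
        simp only [LinearMap.baseChange_tmul, Submodule.coe_subtype]
        rw [TensorProduct.smul_tmul', smul_eq_mul, mul_one]

end Alg

/-- **Density of anti-symmetric elements in the anti-symmetric part of
`(E ⊗ ℚ_p) × (E ⊗ ℝ)`.** Let `E` be a number field with an involutive
`ℚ`-algebra automorphism `c`, and `p` a prime. Give `ℚ_[p] ⊗[ℚ] E` and
`ℝ ⊗[ℚ] E` their canonical (module) topologies. Then the image of the
anti-symmetric elements `{x : E | c x = -x}` under `x ↦ (1 ⊗ x, 1 ⊗ x)` is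
dense in the set of pairs that are anti-symmetric for the base change of `c`
in both coordinates. -/
theorem antisymmetric_dense_padic_real (E : Type*) [Field E] [NumberField E]
    (c : E ≃ₐ[ℚ] E) (hc2 : ∀ x, c (c x) = x) (p : ℕ) [Fact p.Prime] :
    letI : TopologicalSpace (ℚ_[p] ⊗[ℚ] E) := moduleTopology ℚ_[p] (ℚ_[p] ⊗[ℚ] E)
    letI : TopologicalSpace (ℝ ⊗[ℚ] E) := moduleTopology ℝ (ℝ ⊗[ℚ] E)
    {yz : (ℚ_[p] ⊗[ℚ] E) × (ℝ ⊗[ℚ] E) |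
        LinearMap.baseChange ℚ_[p] c.toLinearMap yz.1 = -yz.1 ∧
        LinearMap.baseChange ℝ c.toLinearMap yz.2 = -yz.2}
      ⊆ closure
          ((fun x : E => ((1 : ℚ_[p]) ⊗ₜ[ℚ] x, (1 : ℝ) ⊗ₜ[ℚ] x)) '' {x : E | c x = -x}) := by
  letI : TopologicalSpace (ℚ_[p] ⊗[ℚ] E) := moduleTopology ℚ_[p] (ℚ_[p] ⊗[ℚ] E)
  letI : TopologicalSpace (ℝ ⊗[ℚ] E) := moduleTopology ℝ (ℝ ⊗[ℚ] E)
  haveI : ContinuousAdd (ℚ_[p] ⊗[ℚ] E) := ModuleTopology.continuousAdd ℚ_[p] _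
  haveI : ContinuousSMul ℚ_[p] (ℚ_[p] ⊗[ℚ] E) := ModuleTopology.continuousSMul ℚ_[p] _
  haveI : ContinuousAdd (ℝ ⊗[ℚ] E) := ModuleTopology.continuousAdd ℝ _
  haveI : ContinuousSMul ℝ (ℝ ⊗[ℚ] E) := ModuleTopology.continuousSMul ℝ _
  intro yz hyz
  obtain ⟨hy1, hy2⟩ := hyz
  obtain ⟨a, ha⟩ := exists_repr ℚ_[p] c hc2 yz.1 hy1
  obtain ⟨a', ha'⟩ := exists_repr ℝ c hc2 yz.2 hy2
  have hfpc : Continuous (fun u : Fin (Module.finrank ℚ (Wc c)) → ℚ_[p] =>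
      ∑ i, u i ⊗ₜ[ℚ] ((bW c i : E))) := by
    have heq : (fun u : Fin (Module.finrank ℚ (Wc c)) → ℚ_[p] =>
        ∑ i, u i ⊗ₜ[ℚ] ((bW c i : E)))
        = fun u => ∑ i, u i • ((1:ℚ_[p]) ⊗ₜ[ℚ] ((bW c i : E))) := by
      funext u
      refine Finset.sum_congr rfl fun i _ => ?_
      rw [TensorProduct.smul_tmul', smul_eq_mul, mul_one]
    rw [heq]
    exact continuous_finset_sum _ fun i _ => (continuous_apply i).fun_smul continuous_const
  have hfrc : Continuous (fun u : Fin (Module.finrank ℚ (Wc c)) → ℝ =>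
      ∑ i, u i ⊗ₜ[ℚ] ((bW c i : E))) := by
    have heq : (fun u : Fin (Module.finrank ℚ (Wc c)) → ℝ =>
        ∑ i, u i ⊗ₜ[ℚ] ((bW c i : E)))
        = fun u => ∑ i, u i • ((1:ℝ) ⊗ₜ[ℚ] ((bW c i : E))) := by
      funext u
      refine Finset.sum_congr rfl fun i _ => ?_
      rw [TensorProduct.smul_tmul', smul_eq_mul, mul_one]
    rw [heq]
    exact continuous_finset_sum _ fun i _ => (continuous_apply i).fun_smul continuous_const
  have hF : Continuous (fun uv : (Fin (Module.finrank ℚ (Wc c)) → ℚ_[p]) ×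
      (Fin (Module.finrank ℚ (Wc c)) → ℝ) =>
      (∑ i, uv.1 i ⊗ₜ[ℚ] ((bW c i : E)), ∑ i, uv.2 i ⊗ₜ[ℚ] ((bW c i : E)))) :=
    (hfpc.comp continuous_fst).prodMk (hfrc.comp continuous_snd)
  have hmem : (a, a') ∈ closure (Set.range fun q : Fin (Module.finrank ℚ (Wc c)) → ℚ =>
      ((fun i => ((q i : ℚ_[p]))), (fun i => ((q i : ℝ))))) := by
    rw [Metric.mem_closure_iff]
    intro ε hε
    have h := fun i : Fin (Module.finrank ℚ (Wc c)) => ratDensePair p (a i) (a' i) hε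
    choose q hq1 hq2 using h
    refine ⟨_, ⟨q, rfl⟩, ?_⟩
    rw [Prod.dist_eq]
    refine max_lt ?_ ?_
    · exact (dist_pi_lt_iff hε).2 fun i => by rw [dist_eq_norm]; exact hq1 i
    · exact (dist_pi_lt_iff hε).2 fun i => by rw [Real.dist_eq]; exact hq2 i
  have hmt : Set.MapsTo (fun uv : (Fin (Module.finrank ℚ (Wc c)) → ℚ_[p]) ×
      (Fin (Module.finrank ℚ (Wc c)) → ℝ) =>
      (∑ i, uv.1 i ⊗ₜ[ℚ] ((bW c i : E)), ∑ i, uv.2 i ⊗ₜ[ℚ] ((bW c i : E))))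
      (Set.range fun q : Fin (Module.finrank ℚ (Wc c)) → ℚ =>
        ((fun i => ((q i : ℚ_[p]))), (fun i => ((q i : ℝ)))))
      ((fun x : E => ((1 : ℚ_[p]) ⊗ₜ[ℚ] x, (1 : ℝ) ⊗ₜ[ℚ] x)) '' {x : E | c x = -x}) := by
    rintro _ ⟨q, rfl⟩
    set xq : Wc c := ∑ i, q i • bW c i with hxq
    have hxqE : (xq : E) = ∑ i, q i • ((bW c i : E)) := by
      rw [hxq]
      push_cast
      rfl
    refine ⟨(xq : E), mem_Wc.mp xq.2, ?_⟩
    have e1 : ∑ i, ((q i : ℚ_[p])) ⊗ₜ[ℚ] ((bW c i : E)) = (1 : ℚ_[p]) ⊗ₜ[ℚ] (xq : E) := by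
      rw [hxqE, tmul_sum]
      refine Finset.sum_congr rfl fun i _ => ?_
      rw [← Rat.smul_one_eq_cast ℚ_[p] (q i), TensorProduct.smul_tmul]
    have e2 : ∑ i, ((q i : ℝ)) ⊗ₜ[ℚ] ((bW c i : E)) = (1 : ℝ) ⊗ₜ[ℚ] (xq : E) := by
      rw [hxqE, tmul_sum]
      refine Finset.sum_congr rfl fun i _ => ?_
      rw [← Rat.smul_one_eq_cast ℝ (q i), TensorProduct.smul_tmul]
    show ((1 : ℚ_[p]) ⊗ₜ[ℚ] ((xq : E)), (1 : ℝ) ⊗ₜ[ℚ] ((xq : E)))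
      = (∑ i, ((q i : ℚ_[p])) ⊗ₜ[ℚ] ((bW c i : E)),
        ∑ i, ((q i : ℝ)) ⊗ₜ[ℚ] ((bW c i : E)))
    rw [e1, e2]
  have hyz_eq : yz = (∑ i, a i ⊗ₜ[ℚ] ((bW c i : E)), ∑ i, a' i ⊗ₜ[ℚ] ((bW c i : E))) :=
    Prod.ext ha ha'
  rw [hyz_eq]
  have hfinal := map_mem_closure hF hmem hmt
  exact hfinal
end

section
/- Let $R$ be a commutative ring, $H$ a finite set of cardinality $2g$ with a fixed-point-free involution $c : H \to H$, and $x : H \to R$ any function. For $\Psi \subseteq H$ set $D(\Psi) := \prod (x(\tau) - x(\tau'))^2$, the product over unordered pairs $\{\tau, \tau'\}$ of distinct elements of $\Psi$ (well defined since the factors are squares). Call $\Phi \subseteq H$ a CM-type if $\Phi \cap c(\Phi) = \emptyset$ and $\Phi \cup c(\Phi) = H$. Let $\varphi \subseteq H$ satisfy $\varphi \cap c(\varphi) = \emptyset$ and set $k := g - |\varphi|$; assume $k \geq 1$. Let $\Phi_1$ be any CM-type and put $P := \prod_{\tau \in \Phi_1} (x(\tau) - x(c\tau))^2$ and $P_{\varphi}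 := \prod_{\tau \in \varphi} (x(\tau) - x(c\tau))^2$. Then $$\Big(\prod_{\substack{\Phi \text{ CM-type} \\ \varphi \subseteq \Phi}} D(\Phi)\, D(c\Phi)\Big) \cdot P^{\,2^{k-1}} \cdot D(\varphi \cup c\varphi)^{\,2^{k-1}} \;=\; D(H)^{\,2^{k-1}} \cdot P_{\varphi}^{\,2^{k-1}} \cdot \big(D(\varphi)\, D(c\varphi)\big)^{\,2^{k}}.$$ (The left-hand factor $P$ does not depend on the choice of CM-type $\Phi_1$, since each factor $(x(\tau)-x(c\tau))^2$ is unchanged when $\tau$ is replaced by $c\tau$.) -/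
/-! For `τ ∉ φ ∪ cφ`, the CM-types containing `φ` are those containing `φ ∪ {τ}` together with
those containing `φ ∪ {cτ}`; this drives an induction on `k`. Cancel `D(φ ∪ cφ)^(2^(k-1))`
formally by writing `D(H) / D(U)` as the product over the pairs not contained in `U`. The claim
becomes `∏ D(Φ) D(cΦ) · P^(2^(k-1)) = W(φ)^(2^(k-1))` with
`W(φ) = (D(φ) D(cφ))² P_φ D(H) / D(φ ∪ cφ)`, and the induction step is the identity
`W(φ)² = W(φ ∪ {τ}) W(φ ∪ {cτ})` between products of squared differences. For `k = 1` both
extensions are CM-types, and `P` does not depend on the CM-type because its factors are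
`c`-invariant. -/

/-- The symmetric function `(a, b) ↦ (x a - x b)^2` descended to unordered pairs. -/
def sqDiff {H R : Type*} [CommRing R] (x : H → R) : Sym2 H → R :=
  Sym2.lift ⟨fun a b => (x a - x b) ^ 2, fun a b => by ring⟩

/-- `D(Ψ) = ∏ (x τ - x τ')²`, the product over unordered pairs of distinct
elements of `Ψ` (well defined since the factors are squares). -/
def discProd {H R : Type*} [DecidableEq H] [CommRing R] (x : H → R) (Ψ : Finset H) : R :=
  ∏ s ∈ Ψ.sym2.filter (fun s => ¬ s.IsDiag), sqDiff x s

open Finset Function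

section Discriminant

variable {H R : Type*} [DecidableEq H] [CommRing R] (x : H → R)

def crossProd (A B : Finset H) : R := ∏ a ∈ A, ∏ b ∈ B, (x a - x b) ^ 2

theorem discProd_insert {a : H} {Ψ : Finset H} (ha : a ∉ Ψ) :
    discProd x (insert a Ψ) = (∏ b ∈ Ψ, (x a - x b) ^ 2) * discProd x Ψ := by
  simp only [discProd, prod_filter, ← cons_eq_insert _ _ ha, sym2_cons, prod_disjUnion, prod_map,
    prod_cons, Sym2.mkEmbedding_apply, Sym2.mk_isDiag_iff, not_true, if_false, one_mul]
  congr 1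
  exact prod_congr rfl fun b hb => if_pos (ne_of_mem_of_not_mem hb ha).symm

theorem discProd_union {A B : Finset H} (h : Disjoint A B) :
    discProd x (A ∪ B) = discProd x A * discProd x B * crossProd x A B := by
  induction A using Finset.induction_on with
  | empty => simp [discProd, crossProd]
  | insert a A ha ih =>
    rw [disjoint_insert_left] at h
    rw [insert_union, discProd_insert x (by simp [ha, h.1]), discProd_insert x ha, ih h.2,
      crossProd, crossProd, prod_insert ha, prod_union h.2]
    ring

variable [Fintype H]

def discProdCompl (U : Finset H) : R := discProd x Uᶜ * crossProd x U Uᶜ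

theorem discProd_mul_discProdCompl (U : Finset H) :
    discProd x U * discProdCompl x U = discProd x univ := by
  rw [discProdCompl, ← mul_assoc, ← discProd_union x disjoint_compl_right, union_compl]

theorem discProdCompl_univ : discProdCompl x (univ : Finset H) = 1 := by
  simp [discProdCompl, discProd, crossProd]

theorem discProdCompl_eq_mul_insert {a : H} {U : Finset H} (ha : a ∉ U) :
    discProdCompl x U = (∏ u ∈ U, (x a - x u) ^ 2) * discProdCompl x (insert a U) := by
  have ha' : a ∉ (insert a U)ᶜ := by simp
  have hcompl : Uᶜ = insert a (insert a U)ᶜ := by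
    ext b
    by_cases hb : b = a <;> simp [hb, ha]
  have hflip : ∏ u ∈ U, (x u - x a) ^ 2 = ∏ u ∈ U, (x a - x u) ^ 2 :=
    prod_congr rfl fun _ _ => by ring
  rw [discProdCompl, discProdCompl, hcompl, discProd_insert x ha', crossProd, crossProd,
    prod_insert ha]
  simp only [prod_insert ha', prod_mul_distrib, hflip]
  ring

end Discriminant

section CMType

variable {H : Type*} {c : H → H}

def IsCMType (c : H → H) (Φ : Finset H) : Prop := ∀ τ, c τ ∈ Φ ↔ τ ∉ Φ

theorem IsCMType.apply_ne {Φ : Finset H} (hΦ : IsCMType c Φ) (τ : H) : c τ ≠ τ := fun h =>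
  iff_not_self (h ▸ hΦ τ)

variable [DecidableEq H]

theorem mem_image_of_involutive (hc : Involutive c) {s : Finset H} {τ : H} :
    τ ∈ s.image c ↔ c τ ∈ s :=
  ⟨fun h => by obtain ⟨b, hb, rfl⟩ := mem_image.1 h; rwa [hc],
    fun h => mem_image.2 ⟨c τ, h, hc τ⟩⟩

theorem IsCMType.prod_eq {M : Type*} [CommMonoid M] (hc : Involutive c) {Φ Ψ : Finset H}
    (hΦ : IsCMType c Φ) (hΨ : IsCMType c Ψ) {f : H → M} (hf : ∀ τ, f (c τ) = f τ) :
    ∏ τ ∈ Φ, f τ = ∏ τ ∈ Ψ, f τ := by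
  have hsdiff : Φ \ Ψ = (Ψ \ Φ).image c := by
    ext τ
    simp only [mem_sdiff, mem_image_of_involutive hc, hΦ τ, hΨ τ]
    tauto
  rw [← prod_inter_mul_prod_sdiff Φ Ψ, ← prod_inter_mul_prod_sdiff Ψ Φ, inter_comm, hsdiff,
    prod_image hc.injective.injOn]
  simp only [hf]

theorem inter_image_insert_eq_empty (hc : Involutive c) {φ : Finset H} {a : H}
    (hφ : φ ∩ φ.image c = ∅) (ha : a ∉ φ ∪ φ.image c) (hca : c a ≠ a) :
    insert a φ ∩ (insert a φ).image c = ∅ := by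
  simp only [eq_empty_iff_forall_notMem, mem_inter, mem_insert, mem_image_of_involutive hc,
    mem_union] at hφ ha ⊢
  rintro τ ⟨rfl | hτ, hcτ | hcτ⟩
  · exact hca hcτ
  · exact ha (Or.inr hcτ)
  · exact ha (Or.inr (by rwa [← hcτ, hc]))
  · exact hφ τ ⟨hτ, hcτ⟩

theorem union_image_insert (φ : Finset H) (a : H) :
    insert a φ ∪ (insert a φ).image c = insert a (insert (c a) (φ ∪ φ.image c)) := by
  rw [image_insert, insert_union, union_insert]

theorem apply_mem_union_image (hc : Involutive c) {φ : Finset H} {a : H} :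
    c a ∈ φ ∪ φ.image c ↔ a ∈ φ ∪ φ.image c := by
  simp only [mem_union, mem_image_of_involutive hc, hc a, or_comm]

theorem union_image_insert_apply (hc : Involutive c) (φ : Finset H) (a : H) :
    insert (c a) φ ∪ (insert (c a) φ).image c = insert a φ ∪ (insert a φ).image c := by
  rw [union_image_insert, union_image_insert, hc a, insert_comm]

variable [Fintype H]

theorem isCMType_iff (hc : Involutive c) {Φ : Finset H} :
    IsCMType c Φ ↔ Φ ∩ Φ.image c = ∅ ∧ Φ ∪ Φ.image c = univ := by
  simp only [IsCMType, eq_empty_iff_forall_notMem, eq_univ_iff_forall, mem_inter, mem_union,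
    mem_image_of_involutive hc]
  exact ⟨fun h => ⟨fun τ => by have := h τ; tauto, fun τ => by have := h τ; tauto⟩,
    fun h τ => by have := h.1 τ; have := h.2 τ; tauto⟩

def cmTypesContaining (c : H → H) (φ : Finset H) : Finset (Finset H) :=
  univ.filter fun Φ => (Φ ∩ Φ.image c = ∅ ∧ Φ ∪ Φ.image c = univ) ∧ φ ⊆ Φ

theorem mem_cmTypesContaining (hc : Involutive c) {φ Φ : Finset H} :
    Φ ∈ cmTypesContaining c φ ↔ IsCMType c Φ ∧ φ ⊆ Φ := by
  simp [cmTypesContaining, isCMType_iff hc]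

theorem prod_cmTypesContaining_eq_mul_insert {M : Type*} [CommMonoid M] (hc : Involutive c)
    (φ : Finset H) (τ : H) (f : Finset H → M) :
    ∏ Φ ∈ cmTypesContaining c φ, f Φ =
      (∏ Φ ∈ cmTypesContaining c (insert τ φ), f Φ) *
        ∏ Φ ∈ cmTypesContaining c (insert (c τ) φ), f Φ := by
  rw [← prod_filter_mul_prod_filter_not (cmTypesContaining c φ) (τ ∈ ·)]
  congr 2 <;> ext Φ <;> simp only [mem_filter, mem_cmTypesContaining hc, insert_subset_iff]
  · tauto
  · exact ⟨fun ⟨⟨hΦ, hφ⟩, hτ⟩ => ⟨hΦ, (hΦ τ).2 hτ, hφ⟩,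
      fun ⟨hΦ, hτ, hφ⟩ => ⟨⟨hΦ, hφ⟩, (hΦ τ).1 hτ⟩⟩

theorem cmTypesContaining_of_isCMType (hc : Involutive c) {φ : Finset H} (hφ : IsCMType c φ) :
    cmTypesContaining c φ = {φ} := by
  ext Φ
  rw [mem_cmTypesContaining hc, mem_singleton]
  constructor
  · rintro ⟨hΦ, hsub⟩
    refine (subset_antisymm hsub fun τ hτ => ?_).symm
    by_contra h
    exact (hΦ τ).1 (hsub ((hφ τ).2 h)) hτ
  · rintro rfl
    exact ⟨hφ, subset_rfl⟩

theorem card_compl_union_image_insert (hc : Involutive c) {φ : Finset H} {a : H}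
    (ha : a ∉ φ ∪ φ.image c) (hne : c a ≠ a) :
    #(insert a φ ∪ (insert a φ).image c)ᶜ + 2 = #(φ ∪ φ.image c)ᶜ := by
  have ha' : a ∉ insert (c a) (φ ∪ φ.image c) := by
    rw [mem_insert, not_or]; exact ⟨hne.symm, ha⟩
  have hcard := card_le_univ (insert a (insert (c a) (φ ∪ φ.image c)))
  rw [card_insert_of_notMem ha', card_insert_of_notMem ((apply_mem_union_image hc).not.2 ha)]
    at hcard
  rw [union_image_insert, card_compl, card_compl, card_insert_of_notMem ha',
    card_insert_of_notMem ((apply_mem_union_image hc).not.2 ha)]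
  omega

theorem exists_free_orbit (hc : Involutive c) (hfree : ∀ τ, c τ ≠ τ) {φ : Finset H}
    (hφ : φ ∩ φ.image c = ∅) (hpos : 0 < #(φ ∪ φ.image c)ᶜ) :
    ∃ a, a ∉ φ ∪ φ.image c ∧ insert a φ ∩ (insert a φ).image c = ∅ ∧
      insert (c a) φ ∩ (insert (c a) φ).image c = ∅ ∧
      #(insert a φ ∪ (insert a φ).image c)ᶜ + 2 = #(φ ∪ φ.image c)ᶜ := by
  obtain ⟨a, ha⟩ := card_pos.1 hpos
  rw [mem_compl] at ha
  exact ⟨a, ha, inter_image_insert_eq_empty hc hφ ha (hfree a),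
    inter_image_insert_eq_empty hc hφ ((apply_mem_union_image hc).not.2 ha) (hfree (c a)),
    card_compl_union_image_insert hc ha (hfree a)⟩

end CMType

section Weight

variable {H R : Type*} [DecidableEq H] [Fintype H] [CommRing R] (x : H → R) {c : H → H}

def discWeight (c : H → H) (φ : Finset H) : R :=
  (discProd x φ * discProd x (φ.image c)) ^ 2 *
    ((∏ τ ∈ φ, (x τ - x (c τ)) ^ 2) * discProdCompl x (φ ∪ φ.image c))

theorem discProd_insert_mul_discProd_insert (hc : Involutive c) {φ : Finset H} {a : H}
    (hφ : φ ∩ φ.image c = ∅) (ha : a ∉ φ ∪ φ.image c) (hne : c a ≠ a) :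
    discProd x (insert a φ) * discProd x ((insert a φ).image c) *
        (discProd x (insert (c a) φ) * discProd x ((insert (c a) φ).image c)) *
        (x a - x (c a)) ^ 2 * discProdCompl x (insert a φ ∪ (insert a φ).image c) =
      (discProd x φ * discProd x (φ.image c)) ^ 2 * discProdCompl x (φ ∪ φ.image c) := by
  have hdisj := disjoint_iff_inter_eq_empty.2 hφ
  have hmem : a ∉ φ ∧ c a ∉ φ := by simpa [mem_image_of_involutive hc] using ha
  have hmem' : a ∉ φ.image c ∧ c a ∉ φ.image c := by
    simpa [mem_image_of_involutive hc, hc a] using hmem.symm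
  have ha' : a ∉ insert (c a) (φ ∪ φ.image c) := by
    rw [mem_insert, not_or]; exact ⟨hne.symm, ha⟩
  rw [discProdCompl_eq_mul_insert x ((apply_mem_union_image hc).not.2 ha),
    discProdCompl_eq_mul_insert x ha', union_image_insert,
    prod_insert ((apply_mem_union_image hc).not.2 ha), prod_union hdisj, prod_union hdisj,
    image_insert, image_insert, hc a, discProd_insert x hmem.1, discProd_insert x hmem.2,
    discProd_insert x hmem'.1, discProd_insert x hmem'.2]
  ring

theorem discWeight_sq (hc : Involutive c) {φ : Finset H} {a : H}
    (hφ : φ ∩ φ.image c = ∅) (ha : a ∉ φ ∪ φ.image c) (hne : c a ≠ a) :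
    discWeight x c φ ^ 2 = discWeight x c (insert a φ) * discWeight x c (insert (c a) φ) := by
  have key := discProd_insert_mul_discProd_insert x hc hφ ha hne
  have hmem : a ∉ φ ∧ c a ∉ φ := by simpa [mem_image_of_involutive hc] using ha
  rw [discWeight, discWeight, discWeight, union_image_insert_apply hc, prod_insert hmem.1,
    prod_insert hmem.2, hc a]
  linear_combination (-(∏ τ ∈ φ, (x τ - x (c τ)) ^ 2) ^ 2) * congr($key ^ 2)

theorem prod_cmTypesContaining_mul_pow (hc : Involutive c) {Φ₁ : Finset H}
    (hΦ₁ : IsCMType c Φ₁) {k : ℕ} (hk : 1 ≤ k) {φ : Finset H} (hφ : φ ∩ φ.image c = ∅)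
    (hcard : #(φ ∪ φ.image c)ᶜ = 2 * k) :
    (∏ Φ ∈ cmTypesContaining c φ, discProd x Φ * discProd x (Φ.image c)) *
        (∏ τ ∈ Φ₁, (x τ - x (c τ)) ^ 2) ^ 2 ^ (k - 1) =
      discWeight x c φ ^ 2 ^ (k - 1) := by
  induction k, hk using Nat.le_induction generalizing φ with
  | base =>
    obtain ⟨a, ha, hφ', hφ'', hcard'⟩ := exists_free_orbit hc hΦ₁.apply_ne hφ (by omega)
    have hU : insert a φ ∪ (insert a φ).image c = univ :=
      compl_eq_empty_iff _ |>.1 (card_eq_zero.1 (by omega))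
    have hCM : IsCMType c (insert a φ) := (isCMType_iff hc).2 ⟨hφ', hU⟩
    have hCM' : IsCMType c (insert (c a) φ) :=
      (isCMType_iff hc).2 ⟨hφ'', (union_image_insert_apply hc φ a).trans hU⟩
    have key := discProd_insert_mul_discProd_insert x hc hφ ha (hΦ₁.apply_ne a)
    rw [hU, discProdCompl_univ, mul_one] at key
    rw [prod_cmTypesContaining_eq_mul_insert hc φ a, cmTypesContaining_of_isCMType hc hCM,
      cmTypesContaining_of_isCMType hc hCM', prod_singleton, prod_singleton,
      hΦ₁.prod_eq hc hCM fun τ => by rw [hc τ]; ring, prod_insert (notMem_union.1 ha).1,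
      discWeight]
    linear_combination (∏ τ ∈ φ, (x τ - x (c τ)) ^ 2) * key
  | succ k hk ih =>
    obtain ⟨a, ha, hφ', hφ'', hcard'⟩ := exists_free_orbit hc hΦ₁.apply_ne hφ (by omega)
    have hpow : 2 ^ (k + 1 - 1) = 2 * 2 ^ (k - 1) := by
      rw [← pow_succ', Nat.add_sub_cancel, Nat.sub_add_cancel hk]
    rw [prod_cmTypesContaining_eq_mul_insert hc φ a, hpow, pow_mul, pow_mul (discWeight x c φ),
      discWeight_sq x hc hφ ha (hΦ₁.apply_ne a), mul_pow,
      ← ih hφ' (by omega), ← ih hφ'' (by rw [union_image_insert_apply hc]; omega)]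
    ring

end Weight

theorem discriminant_product_identity_general {H : Type*} [Fintype H] [DecidableEq H]
    {R : Type*} [CommRing R]
    (g : ℕ) (hcard : Fintype.card H = 2 * g)
    (c : H → H) (hinv : ∀ τ, c (c τ) = τ)
    (x : H → R)
    (φ : Finset H) (hφ : φ ∩ φ.image c = ∅)
    (k : ℕ) (hk : k = g - φ.card) (hk1 : 1 ≤ k)
    (Φ₁ : Finset H) (hΦ₁ : Φ₁ ∩ Φ₁.image c = ∅ ∧ Φ₁ ∪ Φ₁.image c = Finset.univ) :
    (∏ Φ ∈ Finset.univ.filter (fun Φ : Finset H =>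
          (Φ ∩ Φ.image c = ∅ ∧ Φ ∪ Φ.image c = Finset.univ) ∧ φ ⊆ Φ),
        discProd x Φ * discProd x (Φ.image c))
      * (∏ τ ∈ Φ₁, (x τ - x (c τ)) ^ 2) ^ (2 ^ (k - 1))
      * (discProd x (φ ∪ φ.image c)) ^ (2 ^ (k - 1))
    = (discProd x Finset.univ) ^ (2 ^ (k - 1))
      * (∏ τ ∈ φ, (x τ - x (c τ)) ^ 2) ^ (2 ^ (k - 1))
      * (discProd x φ * discProd x (φ.image c)) ^ (2 ^ k) := by
  have hc : Involutive c := hinv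
  have hcompl : #(φ ∪ φ.image c)ᶜ = 2 * k := by
    rw [card_compl, card_union_of_disjoint (disjoint_iff_inter_eq_empty.2 hφ),
      card_image_of_injective _ hc.injective, hcard]
    omega
  have hpow : 2 ^ k = 2 ^ (k - 1) * 2 := by rw [← pow_succ, Nat.sub_add_cancel hk1]
  change (∏ Φ ∈ cmTypesContaining c φ, discProd x Φ * discProd x (Φ.image c)) * _ * _ = _
  rw [prod_cmTypesContaining_mul_pow x hc ((isCMType_iff hc).2 hΦ₁) hk1 hφ hcompl, discWeight,
    ← discProd_mul_discProdCompl x (φ ∪ φ.image c), hpow, pow_mul]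
  ring

/-- **The discriminant product identity for CM-types containing a partial
CM-type.** Let `H` be a finite set of cardinality `2g` with a fixed-point-free
involution `c`, `x : H → R` a function to a commutative ring, `φ` a partial
CM-type with `k = g - |φ| ≥ 1`, and `Φ₁` any CM-type. With
`P = ∏_{τ ∈ Φ₁} (x τ - x (c τ))²` and `P_φ = ∏_{τ ∈ φ} (x τ - x (c τ))²`, one
has
`(∏_{Φ ⊇ φ CM-type} D(Φ) D(cΦ)) · P^{2^{k-1}} · D(φ ∪ cφ)^{2^{k-1}}
  = D(H)^{2^{k-1}} · P_φ^{2^{k-1}} · (D(φ) D(cφ))^{2^k}`. -/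
theorem discriminant_product_identity {H : Type*} [Fintype H] [DecidableEq H]
    {R : Type*} [CommRing R]
    (g : ℕ) (hcard : Fintype.card H = 2 * g)
    (c : H → H) (hinv : ∀ τ, c (c τ) = τ) (hfree : ∀ τ, c τ ≠ τ)
    (x : H → R)
    (φ : Finset H) (hφ : φ ∩ φ.image c = ∅)
    (k : ℕ) (hk : k = g - φ.card) (hk1 : 1 ≤ k)
    (Φ₁ : Finset H) (hΦ₁ : Φ₁ ∩ Φ₁.image c = ∅ ∧ Φ₁ ∪ Φ₁.image c = Finset.univ) :
    (∏ Φ ∈ Finset.univ.filter (fun Φ : Finset H =>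
          (Φ ∩ Φ.image c = ∅ ∧ Φ ∪ Φ.image c = Finset.univ) ∧ φ ⊆ Φ),
        discProd x Φ * discProd x (Φ.image c))
      * (∏ τ ∈ Φ₁, (x τ - x (c τ)) ^ 2) ^ (2 ^ (k - 1))
      * (discProd x (φ ∪ φ.image c)) ^ (2 ^ (k - 1))
    = (discProd x Finset.univ) ^ (2 ^ (k - 1))
      * (∏ τ ∈ φ, (x τ - x (c τ)) ^ 2) ^ (2 ^ (k - 1))
      * (discProd x φ * discProd x (φ.image c)) ^ (2 ^ k) :=
  discriminant_product_identity_general g hcard c hinv x φ hφ k hk hk1 Φ₁ hΦ₁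
end
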